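/- arXiv:2405.11174 — 2 statements merged into one kernel-verified Lean document; each statement's English description precedes it below -/
import Mathlib

section
/- Let G=(V,w,m) be a finite weighted graph satisfying the curvature dimension condition CD(K,n) for some K>0 and n<∞, with deg(x) > 0 for all x, and let P_t := exp(tΔ). Then for every f : V → ℝ, every t ≥ 0 and every x ∈ V, ( 1/(2·Deg(x)) + (1 − e^{−2Kt})/(Kn) ) · (Δ P_t f(x))² ≤ e^{−2Kt} · P_t(Γf)(x). -/
open Filter

variable {V : Type*}

/-- The degree of a vertex in a finite weighted graph. -/
noncomputable def vertexDeg [Fintype V] (w : V → V → ℝ) (x : V) : ℝ := ∑ y, w x y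

/-- The normalized degree `Deg(x) = deg(x)/m(x)`. -/
noncomputable def nDeg [Fintype V] (w : V → V → ℝ) (m : V → ℝ) (x : V) : ℝ :=
  vertexDeg w x / m x

/-- The graph Laplacian `Δf(x) = (1/m(x)) ∑_y w(x,y)(f(y) - f(x))` on a finite weighted graph. -/
noncomputable def graphLap [Fintype V] (w : V → V → ℝ) (m : V → ℝ) (f : V → ℝ) (x : V) : ℝ :=
  (1 / m x) * ∑ y, w x y * (f y - f x)

/-- The Bakry–Émery operator `Γ`, defined by `2Γ(f,g) = Δ(fg) - fΔg - gΔf`. -/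
noncomputable def bakryGamma [Fintype V] (w : V → V → ℝ) (m : V → ℝ) (f g : V → ℝ) (x : V) : ℝ :=
  (graphLap w m (fun z => f z * g z) x - f x * graphLap w m g x - g x * graphLap w m f x) / 2

/-- The iterated Bakry–Émery operator `Γ₂`, defined by
`2Γ₂(f,g) = ΔΓ(f,g) - Γ(f,Δg) - Γ(g,Δf)`. -/
noncomputable def bakryGamma2 [Fintype V] (w : V → V → ℝ) (m : V → ℝ) (f g : V → ℝ) (x : V) : ℝ :=
  (graphLap w m (bakryGamma w m f g) x - bakryGamma w m f (graphLap w m g) x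
    - bakryGamma w m g (graphLap w m f) x) / 2

/-- The curvature dimension condition `CD(K,n)`: `Γ₂(f) ≥ (1/n)(Δf)² + KΓf` pointwise. -/
def CDCond [Fintype V] (w : V → V → ℝ) (m : V → ℝ) (K n : ℝ) : Prop :=
  ∀ f : V → ℝ, ∀ x : V,
    (1 / n) * (graphLap w m f x) ^ 2 + K * bakryGamma w m f f x ≤ bakryGamma2 w m f f x

/-- The matrix of the graph Laplacian: `(lapMatrix w m).mulVec f = graphLap w m f`. -/
noncomputable def lapMatrix [Fintype V] [DecidableEq V] (w : V → V → ℝ) (m : V → ℝ) :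
    Matrix V V ℝ :=
  fun x y => w x y / m x - if x = y then vertexDeg w x / m x else 0

/-- The heat semigroup `P_t = exp (tΔ)`, as the matrix exponential of `t • Δ`. -/
noncomputable def heatSemigroup [Fintype V] [DecidableEq V] (w : V → V → ℝ) (m : V → ℝ)
    (t : ℝ) (f : V → ℝ) : V → ℝ :=
  (NormedSpace.exp (t • lapMatrix w m)).mulVec f

/-! ### Auxiliary definitions and lemmas -/

noncomputable def gammaForm [Fintype V] (w : V → V → ℝ) (m : V → ℝ) (f g : V → ℝ) (x : V) : ℝ :=
  (∑ y, w x y * ((f y - f x) * (g y - g x))) / (2 * m x)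

lemma lapMatrix_mulVec [Fintype V] [DecidableEq V] (w : V → V → ℝ) (m : V → ℝ) (g : V → ℝ) :
    (lapMatrix w m).mulVec g = graphLap w m g := by
  funext x
  simp only [lapMatrix, Matrix.mulVec, dotProduct, graphLap, sub_mul, ite_mul, zero_mul,
    Finset.sum_sub_distrib, Finset.sum_ite_eq, Finset.mem_univ, if_true, mul_sub,
    Finset.mul_sum, vertexDeg, Finset.sum_mul, Finset.sum_div]
  congr 1 <;> exact Finset.sum_congr rfl fun y _ => by ring

lemma bakryGamma_eq_gammaForm [Fintype V] (w : V → V → ℝ) (m : V → ℝ)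
    (f g : V → ℝ) : bakryGamma w m f g = gammaForm w m f g := by
  funext x
  have hkey : ∑ y, w x y * (f y * g y - f x * g x) - f x * ∑ y, w x y * (g y - g x)
      - g x * ∑ y, w x y * (f y - f x) = ∑ y, w x y * ((f y - f x) * (g y - g x)) := by
    rw [Finset.mul_sum, Finset.mul_sum, ← Finset.sum_sub_distrib, ← Finset.sum_sub_distrib]
    exact Finset.sum_congr rfl fun y _ => by ring
  simp only [bakryGamma, gammaForm, graphLap]
  rw [← hkey]
  field_simp

open NormedSpace in
lemma exp_entry_nonneg [Fintype V] [DecidableEq V] (B : Matrix V V ℝ) (hB : ∀ x y, 0 ≤ B x y)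
    (x y : V) : 0 ≤ exp B x y := by
  letI : SeminormedRing (Matrix V V ℝ) := Matrix.linftyOpSemiNormedRing
  letI : NormedRing (Matrix V V ℝ) := Matrix.linftyOpNormedRing
  letI : NormedAlgebra ℝ (Matrix V V ℝ) := Matrix.linftyOpNormedAlgebra
  have hpow : ∀ (k : ℕ) (a b : V), 0 ≤ (B ^ k) a b := by
    intro k
    induction k with
    | zero => intro a b; simp [Matrix.one_apply]; positivity
    | succ n ih =>
      intro a b
      rw [pow_succ]
      exact Finset.sum_nonneg fun z _ => mul_nonneg (ih a z) (hB z b)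
  have hsum : Summable (fun k : ℕ => (Nat.factorial k : ℝ)⁻¹ • B ^ k) := expSeries_summable' B
  let L : Matrix V V ℝ →ₗ[ℝ] ℝ :=
    { toFun := fun M => M x y, map_add' := fun _ _ => rfl, map_smul' := fun _ _ => rfl }
  have hmap := L.toContinuousLinearMap.map_tsum hsum
  rw [exp_eq_tsum (𝕂 := ℝ)]
  show 0 ≤ (∑' k : ℕ, (Nat.factorial k : ℝ)⁻¹ • B ^ k) x y
  have : (∑' k : ℕ, (Nat.factorial k : ℝ)⁻¹ • B ^ k) x y
      = ∑' k : ℕ, (Nat.factorial k : ℝ)⁻¹ * (B ^ k) x y := by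
    exact hmap
  rw [this]
  exact tsum_nonneg fun k => mul_nonneg (by positivity) (hpow k x y)

open NormedSpace in
lemma exp_mulVec_eq_self [Fintype V] [DecidableEq V] (B : Matrix V V ℝ) (g : V → ℝ)
    (hB : B.mulVec g = 0) : (exp B).mulVec g = g := by
  letI : SeminormedRing (Matrix V V ℝ) := Matrix.linftyOpSemiNormedRing
  letI : NormedRing (Matrix V V ℝ) := Matrix.linftyOpNormedRing
  letI : NormedAlgebra ℝ (Matrix V V ℝ) := Matrix.linftyOpNormedAlgebra
  have hsum : Summable (fun k : ℕ => (Nat.factorial k : ℝ)⁻¹ • B ^ k) := expSeries_summable' B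
  funext x
  let L : Matrix V V ℝ →ₗ[ℝ] ℝ :=
    { toFun := fun M => M.mulVec g x,
      map_add' := fun M N => by simp [Matrix.add_mulVec],
      map_smul' := fun c M => by simp [Matrix.smul_mulVec] }
  have hmap := L.toContinuousLinearMap.map_tsum hsum
  rw [exp_eq_tsum (𝕂 := ℝ)]
  show (∑' k : ℕ, (Nat.factorial k : ℝ)⁻¹ • B ^ k).mulVec g x = g x
  have h1 : (∑' k : ℕ, (Nat.factorial k : ℝ)⁻¹ • B ^ k).mulVec g x
      = ∑' k : ℕ, (Nat.factorial k : ℝ)⁻¹ * ((B ^ k).mulVec g x) := by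
    simpa [L] using hmap
  have h2 : ∀ k : ℕ, k ≠ 0 → (Nat.factorial k : ℝ)⁻¹ * ((B ^ k).mulVec g x) = 0 := by
    intro k hk
    obtain ⟨j, rfl⟩ := Nat.exists_eq_succ_of_ne_zero hk
    rw [pow_succ, ← Matrix.mulVec_mulVec, hB, Matrix.mulVec_zero]
    simp
  rw [h1, tsum_eq_single 0 h2]
  simp [Matrix.one_mulVec]

open NormedSpace in
lemma hasDerivAt_expMulVec [Fintype V] [DecidableEq V] (A : Matrix V V ℝ) (g : V → ℝ) (x : V)
    (s : ℝ) :
    HasDerivAt (fun u : ℝ => (exp (u • A)).mulVec g x)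
      ((exp (s • A)).mulVec (A.mulVec g) x) s := by
  letI : SeminormedRing (Matrix V V ℝ) := Matrix.linftyOpSemiNormedRing
  letI : NormedRing (Matrix V V ℝ) := Matrix.linftyOpNormedRing
  letI : NormedAlgebra ℝ (Matrix V V ℝ) := Matrix.linftyOpNormedAlgebra
  have h := hasDerivAt_exp_smul_const (𝕂 := ℝ) A s
  let L : Matrix V V ℝ →ₗ[ℝ] ℝ :=
    { toFun := fun M => M.mulVec g x,
      map_add' := fun M N => by simp [Matrix.add_mulVec],
      map_smul' := fun c M => by simp [Matrix.smul_mulVec] }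
  have h2 := L.toContinuousLinearMap.hasFDerivAt.comp_hasDerivAt s h
  have h3 : L.toContinuousLinearMap (exp (s • A) * A)
      = (exp (s • A)).mulVec (A.mulVec g) x := by
    show (exp (s • A) * A).mulVec g x = _
    rw [← Matrix.mulVec_mulVec]
  exact h2.congr_deriv h3

open NormedSpace in
lemma exp_smul_add [Fintype V] [DecidableEq V] (A : Matrix V V ℝ) (a b : ℝ) :
    exp ((a + b) • A) = exp (a • A) * exp (b • A) := by
  rw [add_smul]
  exact Matrix.exp_add_of_commute _ _ (((Commute.refl A).smul_left a).smul_right b)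

open NormedSpace in
lemma exp_smul_commute [Fintype V] [DecidableEq V] (A : Matrix V V ℝ) (s : ℝ) :
    exp (s • A) * A = A * exp (s • A) :=
  ((Commute.refl A).smul_left s).exp_left

open NormedSpace in
lemma exp_entry_nonneg_of_offdiag [Fintype V] [DecidableEq V] (B : Matrix V V ℝ)
    (hB : ∀ x y, x ≠ y → 0 ≤ B x y) (x y : V) : 0 ≤ exp B x y := by
  classical
  set c : ℝ := ∑ z, |B z z| with hc
  have hcz : ∀ z, -c ≤ B z z := by
    intro z
    have h1 : |B z z| ≤ c := Finset.single_le_sum (f := fun t => |B t t|)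
      (fun t _ => abs_nonneg _) (Finset.mem_univ z)
    have := neg_abs_le (B z z)
    linarith
  set N : Matrix V V ℝ := B + c • (1 : Matrix V V ℝ) with hN
  have hNpos : ∀ a b, 0 ≤ N a b := by
    intro a b
    by_cases hab : a = b
    · subst hab
      have : N a a = B a a + c := by simp [hN, Matrix.one_apply]
      rw [this]; linarith [hcz a]
    · have : N a b = B a b := by simp [hN, Matrix.one_apply, hab]
      rw [this]; exact hB a b hab
  have hBeq : B = N + (-c) • (1 : Matrix V V ℝ) := by
    rw [hN]; abel_nf; simp
  have hcomm : Commute N ((-c) • (1 : Matrix V V ℝ)) :=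
    (Commute.one_right N).smul_right (-c)
  rw [hBeq, Matrix.exp_add_of_commute _ _ hcomm]
  have hexp1 : exp ((-c) • (1 : Matrix V V ℝ)) = Real.exp (-c) • (1 : Matrix V V ℝ) := by
    letI : SeminormedRing (Matrix V V ℝ) := Matrix.linftyOpSemiNormedRing
    letI : NormedRing (Matrix V V ℝ) := Matrix.linftyOpNormedRing
    letI : NormedAlgebra ℝ (Matrix V V ℝ) := Matrix.linftyOpNormedAlgebra
    have h1 : ((-c) • (1 : Matrix V V ℝ)) = algebraMap ℝ (Matrix V V ℝ) (-c) :=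
      (Algebra.algebraMap_eq_smul_one (-c)).symm
    rw [h1]
    convert (algebraMap_exp_comm (𝕂 := ℝ) (𝔸 := Matrix V V ℝ) (-c)).symm using 1
    · rw [Algebra.algebraMap_eq_smul_one]; rfl
    · rw [Algebra.algebraMap_eq_smul_one, Real.exp_eq_exp_ℝ]
  rw [hexp1]
  have : (exp N * Real.exp (-c) • (1 : Matrix V V ℝ)) x y
      = Real.exp (-c) * exp N x y := by
    rw [mul_smul_comm, mul_one]
    simp
  rw [this]
  exact mul_nonneg (Real.exp_nonneg _) (exp_entry_nonneg N hNpos x y)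

lemma jensen_sq [Fintype V] (p v : V → ℝ) (hp : ∀ y, 0 ≤ p y) (hsum : ∑ y, p y = 1) :
    (∑ y, p y * v y) ^ 2 ≤ ∑ y, p y * v y ^ 2 := by
  have h := Finset.sum_mul_sq_le_sq_mul_sq Finset.univ (fun y => Real.sqrt (p y))
    (fun y => Real.sqrt (p y) * v y)
  have h1 : ∀ y : V, Real.sqrt (p y) * (Real.sqrt (p y) * v y) = p y * v y := fun y => by
    rw [← mul_assoc, Real.mul_self_sqrt (hp y)]
  have h2 : ∀ y : V, Real.sqrt (p y) ^ 2 = p y := fun y => Real.sq_sqrt (hp y)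
  have h3 : ∀ y : V, (Real.sqrt (p y) * v y) ^ 2 = p y * v y ^ 2 := fun y => by
    rw [mul_pow, h2 y]
  calc (∑ y, p y * v y) ^ 2 = (∑ y, Real.sqrt (p y) * (Real.sqrt (p y) * v y)) ^ 2 := by
        rw [Finset.sum_congr rfl fun y _ => (h1 y).symm]
    _ ≤ (∑ y, Real.sqrt (p y) ^ 2) * ∑ y, (Real.sqrt (p y) * v y) ^ 2 := h
    _ = ∑ y, p y * v y ^ 2 := by
        rw [Finset.sum_congr rfl fun y _ => h2 y, Finset.sum_congr rfl fun y _ => h3 y, hsum,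
          one_mul]

lemma sq_graphLap_le [Fintype V] (w : V → V → ℝ) (m : V → ℝ) (hnonneg : ∀ x y, 0 ≤ w x y)
    (hm : ∀ x, 0 < m x) (g : V → ℝ) (x : V) :
    (graphLap w m g x) ^ 2 ≤ 2 * (vertexDeg w x / m x) * gammaForm w m g g x := by
  have hcs := Finset.sum_mul_sq_le_sq_mul_sq Finset.univ (fun y => Real.sqrt (w x y))
    (fun y => Real.sqrt (w x y) * (g y - g x))
  have h1 : ∀ y : V, Real.sqrt (w x y) * (Real.sqrt (w x y) * (g y - g x)) = w x y * (g y - g x) :=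
    fun y => by rw [← mul_assoc, Real.mul_self_sqrt (hnonneg x y)]
  have h2 : ∀ y : V, Real.sqrt (w x y) ^ 2 = w x y := fun y => Real.sq_sqrt (hnonneg x y)
  have h3 : ∀ y : V, (Real.sqrt (w x y) * (g y - g x)) ^ 2 = w x y * ((g y - g x) * (g y - g x)) :=
    fun y => by rw [mul_pow, h2 y]; ring
  rw [Finset.sum_congr rfl fun y _ => h1 y, Finset.sum_congr rfl fun y _ => h2 y,
    Finset.sum_congr rfl fun y _ => h3 y] at hcs
  have hmx := hm x
  rw [graphLap, gammaForm, vertexDeg]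
  have hre : 2 * ((∑ y, w x y) / m x) * ((∑ y, w x y * ((g y - g x) * (g y - g x))) / (2 * m x))
      = (∑ y, w x y) * (∑ y, w x y * ((g y - g x) * (g y - g x))) / (m x * m x) := by
    field_simp
  have hre2 : (1 / m x * ∑ y, w x y * (g y - g x)) ^ 2
      = (∑ y, w x y * (g y - g x)) ^ 2 / (m x * m x) := by
    rw [mul_pow, div_pow, one_pow, pow_two]
    rw [div_mul_eq_mul_div, one_mul]
  rw [hre, hre2]
  gcongr

theorem lap_heat_sq_le_of_CD [Fintype V] [DecidableEq V]
    (w : V → V → ℝ) (m : V → ℝ)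
    (hsymm : ∀ x y, w x y = w y x) (hnonneg : ∀ x y, 0 ≤ w x y)
    (hdiag : ∀ x, w x x = 0) (hm : ∀ x, 0 < m x)
    (hdeg : ∀ x, 0 < vertexDeg w x)
    (K n : ℝ) (hK : 0 < K) (hn : 0 < n) (hCD : CDCond w m K n)
    (f : V → ℝ) (t : ℝ) (ht : 0 ≤ t) (x : V) :
    (1 / (2 * nDeg w m x) + (1 - Real.exp (-2 * K * t)) / (K * n)) *
        (graphLap w m (heatSemigroup w m t f) x) ^ 2 ≤
      Real.exp (-2 * K * t) * heatSemigroup w m t (bakryGamma w m f f) x := by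
  classical
  set A : Matrix V V ℝ := lapMatrix w m with hA
  set E : ℝ → Matrix V V ℝ := fun s => NormedSpace.exp (s • A) with hEdef
  -- nonnegativity of heat kernel entries
  have hEnonneg : ∀ s : ℝ, 0 ≤ s → ∀ a b, 0 ≤ E s a b := by
    intro s hs a b
    apply exp_entry_nonneg_of_offdiag
    intro p q hpq
    have : (s • A) p q = s * (w p q / m p) := by
      simp [hA, lapMatrix, hpq, Matrix.smul_apply]
    rw [this]
    exact mul_nonneg hs (div_nonneg (hnonneg p q) (hm p).le)
  -- row sums of the heat kernel are 1
  have hAone : A.mulVec (fun _ => 1) = 0 := by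
    rw [hA, lapMatrix_mulVec]
    funext z
    simp [graphLap]
  have hEone : ∀ s : ℝ, (E s).mulVec (fun _ => 1) = fun _ => 1 := by
    intro s
    apply exp_mulVec_eq_self
    rw [Matrix.smul_mulVec, hAone, smul_zero]
  have hrow : ∀ (s : ℝ) (a : V), ∑ y, E s a y = 1 := by
    intro s a
    have := congrFun (hEone s) a
    simpa [Matrix.mulVec, dotProduct] using this
  -- commutation of the heat semigroup with the Laplacian
  have hcommE : ∀ (s : ℝ) (g : V → ℝ),
      (E s).mulVec (A.mulVec g) = A.mulVec ((E s).mulVec g) := by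
    intro s g
    rw [Matrix.mulVec_mulVec, Matrix.mulVec_mulVec, exp_smul_commute]
  -- the backward heat flow and its Laplacian
  set u : ℝ → V → ℝ := fun s => (E (t - s)).mulVec f with hudef
  set vv : ℝ → V → ℝ := fun s => (E (t - s)).mulVec (A.mulVec f) with hvvdef
  have hveq : ∀ s, vv s = graphLap w m (u s) := by
    intro s
    rw [hvvdef, hudef]
    show (E (t - s)).mulVec (A.mulVec f) = graphLap w m ((E (t - s)).mulVec f)
    rw [hcommE, hA, lapMatrix_mulVec]
  have hu' : ∀ (s : ℝ) (z : V), HasDerivAt (fun r => u r z) (-vv s z) s := by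
    intro s z
    have h0 := hasDerivAt_expMulVec A f z (t - s)
    have hlin : HasDerivAt (fun r : ℝ => t - r) (-1) s := by
      simpa using (hasDerivAt_id s).const_sub t
    have := h0.comp s hlin
    simpa [Function.comp, Function.comp_def, hudef, hvvdef, hEdef] using this
  set γ : ℝ → V → ℝ := fun s => gammaForm w m (u s) (u s) with hγdef
  have hγ' : ∀ (s : ℝ) (y : V),
      HasDerivAt (fun r => γ r y) (-2 * gammaForm w m (u s) (vv s) y) s := by
    intro s y
    have hterm : ∀ z : V, HasDerivAt
        (fun r => w y z * ((u r z - u r y) * (u r z - u r y)))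
        (w y z * ((-vv s z - -vv s y) * (u s z - u s y)
          + (u s z - u s y) * (-vv s z - -vv s y))) s :=
      fun z => (((hu' s z).sub (hu' s y)).mul ((hu' s z).sub (hu' s y))).const_mul (w y z)
    have hsum := HasDerivAt.fun_sum (fun z (_ : z ∈ Finset.univ) => hterm z)
    have hdiv := hsum.div_const (2 * m y)
    have hfun : (fun r => (∑ z, w y z * ((u r z - u r y) * (u r z - u r y))) / (2 * m y))
        = fun r => γ r y := by
      funext r
      rw [hγdef]
      rfl
    rw [hfun] at hdiv
    have hval : (∑ z, w y z * ((-vv s z - -vv s y) * (u s z - u s y)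
          + (u s z - u s y) * (-vv s z - -vv s y))) / (2 * m y)
        = -2 * gammaForm w m (u s) (vv s) y := by
      rw [gammaForm]
      rw [show (-2 : ℝ) * ((∑ z, w y z * ((u s z - u s y) * (vv s z - vv s y))) / (2 * m y))
        = (-2 * ∑ z, w y z * ((u s z - u s y) * (vv s z - vv s y))) / (2 * m y) from
        (mul_div_assoc _ _ _).symm]
      congr 1
      rw [Finset.mul_sum]
      exact Finset.sum_congr rfl fun z _ => by ring
    rw [hval] at hdiv
    exact hdiv
  -- derivative of the heat kernel entries
  have hE' : ∀ (s : ℝ) (y : V), HasDerivAt (fun r => E r x y) ((E s * A) x y) s := by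
    intro s y
    have h0 := hasDerivAt_expMulVec A (Pi.single y 1) x s
    rw [Matrix.mulVec_mulVec] at h0
    have key : ∀ M : Matrix V V ℝ, M.mulVec (Pi.single y 1) x = M x y := by
      intro M
      simp [Matrix.mulVec_single]
    simp only [key] at h0
    exact h0
  set c : ℝ := (graphLap w m ((E t).mulVec f) x) ^ 2 with hc
  set G : ℝ → ℝ := fun s => Real.exp (-2 * K * s) * ∑ y, E s x y * γ s y with hG
  set dG : ℝ → ℝ := fun s => -2 * K * Real.exp (-2 * K * s) * ∑ y, E s x y * γ s y
      + Real.exp (-2 * K * s) * ∑ y, ((E s * A) x y * γ s y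
        + E s x y * (-2 * gammaForm w m (u s) (vv s) y)) with hdG
  have hG' : ∀ s : ℝ, HasDerivAt G (dG s) s := by
    intro s
    have hexp : HasDerivAt (fun r : ℝ => Real.exp (-2 * K * r))
        (-2 * K * Real.exp (-2 * K * s)) s := by
      have h1 : HasDerivAt (fun r : ℝ => -2 * K * r) (-2 * K) s := by
        simpa using (hasDerivAt_id s).const_mul (-2 * K)
      have h2 := (Real.hasDerivAt_exp (-2 * K * s)).comp s h1
      have h3 : HasDerivAt (fun r : ℝ => Real.exp (-2 * K * r))
          (Real.exp (-2 * K * s) * (-2 * K)) s := h2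
      convert h3 using 1
      ring
    have hS : HasDerivAt (fun r => ∑ y, E r x y * γ r y)
        (∑ y, ((E s * A) x y * γ s y + E s x y * (-2 * gammaForm w m (u s) (vv s) y))) s :=
      HasDerivAt.fun_sum fun y _ => (hE' s y).mul (hγ' s y)
    exact hexp.mul hS
  -- key differential inequality
  have hkey : ∀ s : ℝ, 0 ≤ s → 2 / n * Real.exp (-2 * K * s) * c ≤ dG s := by
    intro s hs
    have hsum1 : ∑ y, (E s * A) x y * γ s y = ∑ y, E s x y * graphLap w m (γ s) y := by
      have h2 : (E s * A).mulVec (γ s) x = (E s).mulVec (graphLap w m (γ s)) x := by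
        rw [← lapMatrix_mulVec w m (γ s), ← hA, Matrix.mulVec_mulVec]
      exact h2
    have hdGeq : dG s = Real.exp (-2 * K * s) * ∑ y, E s x y *
        (graphLap w m (γ s) y - 2 * gammaForm w m (u s) (vv s) y - 2 * K * γ s y) := by
      rw [hdG]
      simp only []
      rw [Finset.sum_add_distrib, hsum1]
      have hsplit : ∑ y, E s x y * (graphLap w m (γ s) y - 2 * gammaForm w m (u s) (vv s) y
            - 2 * K * γ s y)
          = ((∑ y, E s x y * graphLap w m (γ s) y)
            + ∑ y, E s x y * (-2 * gammaForm w m (u s) (vv s) y)) + (-2 * K) * ∑ y, E s x y * γ s y := by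
        rw [Finset.mul_sum, ← Finset.sum_add_distrib, ← Finset.sum_add_distrib]
        exact Finset.sum_congr rfl fun y _ => by ring
      rw [hsplit]
      ring
    -- pointwise curvature bound
    have hpoint : ∀ y : V, 2 / n * (vv s y) ^ 2
        ≤ graphLap w m (γ s) y - 2 * gammaForm w m (u s) (vv s) y - 2 * K * γ s y := by
      intro y
      have hcd := hCD (u s) y
      rw [bakryGamma2] at hcd
      simp only [bakryGamma_eq_gammaForm w m] at hcd
      rw [← hveq s] at hcd
      show 2 / n * (vv s y) ^ 2 ≤ graphLap w m (gammaForm w m (u s) (u s)) y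
        - 2 * gammaForm w m (u s) (vv s) y - 2 * K * gammaForm w m (u s) (u s) y
      have h2 : 2 / n * vv s y ^ 2 = 2 * (1 / n * vv s y ^ 2) := by ring
      rw [h2]
      linarith [hcd]
    -- Jensen step
    have hmean : (E s).mulVec (vv s) x = graphLap w m ((E t).mulVec f) x := by
      rw [hvvdef]
      show (E s).mulVec ((E (t - s)).mulVec (A.mulVec f)) x = _
      rw [Matrix.mulVec_mulVec]
      rw [hEdef]
      show ((NormedSpace.exp (s • A)) * (NormedSpace.exp ((t - s) • A))).mulVec
        (A.mulVec f) x = _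
      rw [← exp_smul_add A s (t - s)]
      rw [show s + (t - s) = t by ring]
      have : (NormedSpace.exp (t • A)).mulVec (A.mulVec f)
          = A.mulVec ((NormedSpace.exp (t • A)).mulVec f) := hcommE t f
      rw [this, hA, lapMatrix_mulVec]
    have hjen : c ≤ ∑ y, E s x y * (vv s y) ^ 2 := by
      have h0 : (∑ y, E s x y * vv s y) ^ 2 ≤ ∑ y, E s x y * (vv s y) ^ 2 :=
        jensen_sq (fun y => E s x y) (vv s) (fun y => hEnonneg s hs x y) (hrow s x)
      have h1 : ∑ y, E s x y * vv s y = graphLap w m ((E t).mulVec f) x := hmean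
      rw [hc, ← h1]
      exact h0
    -- assemble
    rw [hdGeq]
    have hexpnn : 0 ≤ Real.exp (-2 * K * s) := (Real.exp_pos _).le
    have hstep : ∑ y, E s x y * (2 / n * (vv s y) ^ 2)
        ≤ ∑ y, E s x y * (graphLap w m (γ s) y - 2 * gammaForm w m (u s) (vv s) y
          - 2 * K * γ s y) :=
      Finset.sum_le_sum fun y _ => mul_le_mul_of_nonneg_left (hpoint y) (hEnonneg s hs x y)
    have hstep2 : 2 / n * c ≤ ∑ y, E s x y * (2 / n * (vv s y) ^ 2) := by
      have : ∑ y, E s x y * (2 / n * (vv s y) ^ 2) = 2 / n * ∑ y, E s x y * (vv s y) ^ 2 := by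
        rw [Finset.mul_sum]
        exact Finset.sum_congr rfl fun y _ => by ring
      rw [this]
      have h2n : (0:ℝ) ≤ 2 / n := by positivity
      exact mul_le_mul_of_nonneg_left hjen h2n
    calc 2 / n * Real.exp (-2 * K * s) * c
        = Real.exp (-2 * K * s) * (2 / n * c) := by ring
      _ ≤ Real.exp (-2 * K * s) * ∑ y, E s x y * (graphLap w m (γ s) y
          - 2 * gammaForm w m (u s) (vv s) y - 2 * K * γ s y) :=
          mul_le_mul_of_nonneg_left (hstep2.trans hstep) hexpnn
  -- monotone interpolation
  set Φ : ℝ → ℝ := fun s => G s - c * ((1 - Real.exp (-2 * K * s)) / (K * n)) with hΦ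
  have hΦ' : ∀ s : ℝ, HasDerivAt Φ (dG s - 2 / n * Real.exp (-2 * K * s) * c) s := by
    intro s
    have hexp : HasDerivAt (fun r : ℝ => Real.exp (-2 * K * r))
        (-2 * K * Real.exp (-2 * K * s)) s := by
      have h1 : HasDerivAt (fun r : ℝ => -2 * K * r) (-2 * K) s := by
        simpa using (hasDerivAt_id s).const_mul (-2 * K)
      have h2 := (Real.hasDerivAt_exp (-2 * K * s)).comp s h1
      have h3 : HasDerivAt (fun r : ℝ => Real.exp (-2 * K * r))
          (Real.exp (-2 * K * s) * (-2 * K)) s := h2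
      convert h3 using 1
      ring
    have h2 : HasDerivAt (fun r : ℝ => 1 - Real.exp (-2 * K * r))
        (2 * K * Real.exp (-2 * K * s)) s := by
      simpa using (hexp.const_sub 1)
    have h3 := (h2.div_const (K * n)).const_mul c
    have h4 := (hG' s).sub h3
    have heq : dG s - c * (2 * K * Real.exp (-2 * K * s) / (K * n))
        = dG s - 2 / n * Real.exp (-2 * K * s) * c := by
      have hKn : K * n ≠ 0 := by positivity
      field_simp
    rw [heq] at h4
    exact h4
  have hmono : Φ 0 ≤ Φ t := by
    have hm1 : MonotoneOn Φ (Set.Icc 0 t) := by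
      apply monotoneOn_of_deriv_nonneg (convex_Icc 0 t)
      · exact fun s _ => ((hΦ' s).continuousAt).continuousWithinAt
      · exact fun s _ => ((hΦ' s).differentiableAt).differentiableWithinAt
      · intro s hs
        rw [(hΦ' s).deriv]
        rw [interior_Icc] at hs
        have hs0 : 0 ≤ s := hs.1.le
        linarith [hkey s hs0]
    exact hm1 (Set.left_mem_Icc.2 ht) (Set.right_mem_Icc.2 ht) ht
  -- endpoint identification
  have hE0 : E 0 = (1 : Matrix V V ℝ) := by
    rw [hEdef]
    show NormedSpace.exp ((0:ℝ) • A) = 1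
    rw [zero_smul, NormedSpace.exp_zero]
  have hu0 : u 0 = (E t).mulVec f := by rw [hudef]; simp
  have hut : u t = f := by
    rw [hudef]
    show (E (t - t)).mulVec f = f
    rw [sub_self, hE0, Matrix.one_mulVec]
  have hG0 : G 0 = gammaForm w m ((E t).mulVec f) ((E t).mulVec f) x := by
    rw [hG]
    simp only [mul_zero, Real.exp_zero, one_mul]
    have : ∑ y, E 0 x y * γ 0 y = γ 0 x := by
      have := congrFun ((hE0 ▸ Matrix.one_mulVec (γ 0) : (E 0).mulVec (γ 0) = γ 0)) x
      simpa [Matrix.mulVec, dotProduct] using this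
    rw [this]
    show gammaForm w m (u 0) (u 0) x = _
    rw [hu0]
  have hGt : G t = Real.exp (-2 * K * t) * heatSemigroup w m t (bakryGamma w m f f) x := by
    rw [hG]
    show Real.exp (-2 * K * t) * ∑ y, E t x y * γ t y
      = Real.exp (-2 * K * t) * heatSemigroup w m t (bakryGamma w m f f) x
    congr 1
    have hγt : γ t = bakryGamma w m f f := by
      rw [bakryGamma_eq_gammaForm]
      show gammaForm w m (u t) (u t) = gammaForm w m f f
      rw [hut]
    rw [hγt]
    show (E t).mulVec (bakryGamma w m f f) x = _
    rfl
  -- lower bound at time 0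
  have hDegpos : 0 < nDeg w m x := div_pos (hdeg x) (hm x)
  have hlow : c / (2 * nDeg w m x) ≤ G 0 := by
    rw [hG0, hc]
    have := sq_graphLap_le w m hnonneg hm ((E t).mulVec f) x
    rw [div_le_iff₀ (by positivity : (0:ℝ) < 2 * nDeg w m x)]
    calc (graphLap w m ((E t).mulVec f) x) ^ 2
        ≤ 2 * (vertexDeg w x / m x) * gammaForm w m ((E t).mulVec f) ((E t).mulVec f) x := this
      _ = gammaForm w m ((E t).mulVec f) ((E t).mulVec f) x * (2 * nDeg w m x) := by
          rw [nDeg]; ring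
  -- final assembly
  have hΦ0 : Φ 0 = G 0 := by
    rw [hΦ]
    simp
  have hΦt : Φ t = G t - c * ((1 - Real.exp (-2 * K * t)) / (K * n)) := rfl
  have hgoal : c = (graphLap w m (heatSemigroup w m t f) x) ^ 2 := by
    rw [hc]
    rfl
  rw [← hgoal, ← hGt]
  have h1 : c / (2 * nDeg w m x) + c * ((1 - Real.exp (-2 * K * t)) / (K * n)) ≤ G t := by
    have h2 : G 0 ≤ G t - c * ((1 - Real.exp (-2 * K * t)) / (K * n)) := by
      rw [hΦ0, hΦt] at hmono
      linarith
    linarith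
  calc (1 / (2 * nDeg w m x) + (1 - Real.exp (-2 * K * t)) / (K * n)) * c
      = c / (2 * nDeg w m x) + c * ((1 - Real.exp (-2 * K * t)) / (K * n)) := by ring
    _ ≤ G t := h1
end

section
/- Let G=(V,w,m) be a finite weighted graph satisfying the curvature dimension condition CD(K,n) for some K>0 and n<∞, with deg(x) > 0 for all x, and let P_t := exp(tΔ). Then for every f : V → ℝ with Γf ≤ 1 pointwise, every T > 0, and every x ∈ V, |P_T f(x) − f(x)| ≤ √(n/K) · arcsin( 1/√(Kn/(2·Deg(x)) + 1) ). -/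
open Filter

variable {V : Type*}

/-! ### Auxiliary machinery -/

set_option linter.unusedSectionVars false

section Aux

open Matrix NormedSpace

attribute [local instance] Matrix.linftyOpNormedRing Matrix.linftyOpNormedAlgebra

variable [Fintype V] [DecidableEq V]

section Algebraic

variable (w : V → V → ℝ) (m : V → ℝ)

lemma gamma_eq (f g : V → ℝ) (x : V) :
    bakryGamma w m f g x = (1 / (2 * m x)) * ∑ y, w x y * ((f y - f x) * (g y - g x)) := by
  have key : (∑ y, w x y * (f y * g y - f x * g x)) - f x * (∑ y, w x y * (g y - g x))
      - g x * (∑ y, w x y * (f y - f x)) = ∑ y, w x y * ((f y - f x) * (g y - g x)) := by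
    rw [Finset.mul_sum, Finset.mul_sum, ← Finset.sum_sub_distrib, ← Finset.sum_sub_distrib]
    exact Finset.sum_congr rfl fun y _ => by ring
  simp only [bakryGamma, graphLap]
  rw [← key]
  ring

lemma gamma_self_eq (g : V → ℝ) (x : V) :
    bakryGamma w m g g x = (1 / (2 * m x)) * ∑ y, w x y * (g y - g x) ^ 2 := by
  rw [gamma_eq]
  simp only [← sq]

lemma gamma2_self (g : V → ℝ) (x : V) :
    2 * bakryGamma2 w m g g x
      = graphLap w m (bakryGamma w m g g) x - 2 * bakryGamma w m g (graphLap w m g) x := by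
  rw [bakryGamma2]; ring

lemma mulVec_lap (g : V → ℝ) : (lapMatrix w m) *ᵥ g = graphLap w m g := by
  funext x
  simp only [lapMatrix, graphLap, Matrix.mulVec, dotProduct, sub_mul, ite_mul, zero_mul,
    Finset.sum_sub_distrib, Finset.sum_ite_eq, Finset.mem_univ, if_true, mul_sub,
    Finset.mul_sum, vertexDeg, Finset.sum_mul]
  rw [Finset.sum_div, Finset.sum_mul, ← Finset.sum_sub_distrib, ← Finset.sum_sub_distrib]
  exact Finset.sum_congr rfl fun y _ => by ring

lemma lap_mulVec_one : (lapMatrix w m) *ᵥ (fun _ => (1:ℝ)) = 0 := by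
  rw [mulVec_lap]
  funext x
  simp [graphLap]

/-- Pointwise Cauchy–Schwarz: `(Δg)² ≤ 2 Deg(x) Γg(x)`. -/
lemma lap_sq_le (hnonneg : ∀ x y, 0 ≤ w x y) (hm : ∀ x, 0 < m x) (g : V → ℝ) (x : V) :
    (graphLap w m g x) ^ 2 ≤ 2 * nDeg w m x * bakryGamma w m g g x := by
  have cs := Finset.sum_sq_le_sum_mul_sum_of_sq_eq_mul Finset.univ
    (f := fun y => w x y) (g := fun y => w x y * (g y - g x) ^ 2)
    (r := fun y => w x y * (g y - g x))
    (fun y _ => hnonneg x y) (fun y _ => mul_nonneg (hnonneg x y) (sq_nonneg _))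
    (fun y _ => by ring)
  rw [graphLap, gamma_self_eq, nDeg, vertexDeg]
  rw [mul_pow]
  have hmx := (hm x).ne'
  calc (1 / m x) ^ 2 * (∑ y, w x y * (g y - g x)) ^ 2
      ≤ (1 / m x) ^ 2 * ((∑ y, w x y) * ∑ y, w x y * (g y - g x) ^ 2) := by
        exact mul_le_mul_of_nonneg_left cs (by positivity)
    _ = 2 * ((∑ y, w x y) / m x) * ((1 / (2 * m x)) * ∑ y, w x y * (g y - g x) ^ 2) := by
        field_simp

end Algebraic

/-- evaluation of `A *ᵥ g` at `x`, as a continuous linear map in `A`. -/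
noncomputable def evalCLM (g : V → ℝ) (x : V) : Matrix V V ℝ →L[ℝ] ℝ :=
  LinearMap.toContinuousLinearMap
    { toFun := fun A => (A *ᵥ g) x
      map_add' := fun A B => by simp [Matrix.add_mulVec]
      map_smul' := fun c A => by simp [Matrix.smul_mulVec] }

lemma evalCLM_apply (g : V → ℝ) (x : V) (A : Matrix V V ℝ) : evalCLM g x A = (A *ᵥ g) x := rfl

noncomputable def entryCLM (i j : V) : Matrix V V ℝ →L[ℝ] ℝ :=
  LinearMap.toContinuousLinearMap
    { toFun := fun A => A i j, map_add' := fun _ _ => rfl, map_smul' := fun _ _ => rfl }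

lemma entryCLM_apply (i j : V) (A : Matrix V V ℝ) : entryCLM i j A = A i j := rfl

lemma exp_mulVec_eq_tsum (A : Matrix V V ℝ) (g : V → ℝ) (x : V) :
    (exp A *ᵥ g) x = ∑' n : ℕ, ((n.factorial : ℝ)⁻¹ • ((A ^ n) *ᵥ g) x) := by
  rw [← evalCLM_apply, NormedSpace.exp_eq_tsum ℝ]
  dsimp only
  rw [ContinuousLinearMap.map_tsum (evalCLM g x) (NormedSpace.expSeries_summable' (𝕂 := ℝ) A)]
  exact tsum_congr fun n => by simp [evalCLM_apply, Matrix.smul_mulVec]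

lemma exp_mulVec_one (A : Matrix V V ℝ) (h : A *ᵥ (fun _ => (1:ℝ)) = 0) (x : V) :
    (exp A *ᵥ (fun _ => (1:ℝ))) x = 1 := by
  rw [exp_mulVec_eq_tsum]
  have h0 : ∀ n : ℕ, n ≠ 0 → ((n.factorial : ℝ)⁻¹ • ((A ^ n) *ᵥ (fun _ => (1:ℝ))) x) = 0 := by
    intro n hn
    obtain ⟨k, rfl⟩ := Nat.exists_eq_succ_of_ne_zero hn
    rw [pow_succ, ← Matrix.mulVec_mulVec, h]
    simp
  rw [tsum_eq_single 0 h0]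
  simp

lemma pow_entry_nonneg {A : Matrix V V ℝ} (hA : ∀ i j, 0 ≤ A i j) (n : ℕ) :
    ∀ i j, 0 ≤ (A ^ n) i j := by
  induction n with
  | zero => intro i j; rw [pow_zero, Matrix.one_apply]; split <;> norm_num
  | succ k ih =>
    intro i j
    rw [pow_succ, Matrix.mul_apply]
    exact Finset.sum_nonneg fun y _ => mul_nonneg (ih i y) (hA y j)

lemma exp_entry_nonneg' {A : Matrix V V ℝ} (hA : ∀ i j, 0 ≤ A i j) (i j : V) :
    0 ≤ exp A i j := by
  have h : entryCLM i j (exp A) = ∑' n : ℕ, ((n.factorial : ℝ)⁻¹ • (A ^ n) i j) := by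
    rw [NormedSpace.exp_eq_tsum ℝ]
    dsimp only
    rw [ContinuousLinearMap.map_tsum (entryCLM i j) (NormedSpace.expSeries_summable' (𝕂 := ℝ) A)]
    exact tsum_congr fun n => by simp [entryCLM_apply]
  rw [entryCLM_apply] at h
  rw [h]
  exact tsum_nonneg fun n => smul_nonneg (by positivity) (pow_entry_nonneg hA n i j)

lemma exp_entry_nonneg_s8 {A : Matrix V V ℝ} (c : ℝ)
    (h : ∀ i j, 0 ≤ A i j + (if i = j then c else 0)) (i j : V) : 0 ≤ exp A i j := by
  have hsm : (-c) • (1 : Matrix V V ℝ) = Matrix.diagonal (fun _ => -c) := by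
    ext i j
    simp [Matrix.one_apply, Matrix.diagonal_apply]
  have hA : A = (A + c • (1 : Matrix V V ℝ)) + (-c) • 1 := by
    rw [add_assoc, ← add_smul]
    simp
  have hcomm : Commute (A + c • (1 : Matrix V V ℝ)) ((-c) • (1 : Matrix V V ℝ)) :=
    ((Commute.one_right _).smul_right (-c))
  rw [hA, Matrix.exp_add_of_commute _ _ hcomm, hsm, Matrix.exp_diagonal, Matrix.mul_diagonal]
  refine mul_nonneg (exp_entry_nonneg' (fun i j => ?_) i j) ?_
  · have := h i j
    rcases eq_or_ne i j with rfl | hij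
    · simpa [Matrix.one_apply] using this
    · simpa [Matrix.one_apply, hij] using this
  · rw [Pi.exp_def, ← Real.exp_eq_exp_ℝ]
    positivity

section WithGraph

variable (w : V → V → ℝ) (m : V → ℝ)

lemma exp_lap_entry_nonneg (hnonneg : ∀ x y, 0 ≤ w x y) (hm : ∀ x, 0 < m x)
    {t : ℝ} (ht : 0 ≤ t) (i j : V) : 0 ≤ exp (t • lapMatrix w m) i j := by
  rcases isEmpty_or_nonempty V with h | h
  · exact ((h.false i)).elim
  refine exp_entry_nonneg_s8 (t * (Finset.univ.sup' Finset.univ_nonempty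
    fun z => vertexDeg w z / m z)) (fun a b => ?_) i j
  have hsup : vertexDeg w a / m a ≤ Finset.univ.sup' Finset.univ_nonempty
      fun z => vertexDeg w z / m z :=
    Finset.le_sup' (fun z => vertexDeg w z / m z) (Finset.mem_univ a)
  rcases eq_or_ne a b with rfl | hab
  · simp only [lapMatrix, Matrix.smul_apply, if_true, smul_eq_mul]
    have h1 : 0 ≤ w a a / m a := div_nonneg (hnonneg a a) (hm a).le
    nlinarith [mul_le_mul_of_nonneg_left hsup ht]
  · simp only [lapMatrix, Matrix.smul_apply, hab, if_false, smul_eq_mul, add_zero, sub_zero]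
    exact mul_nonneg ht (div_nonneg (hnonneg a b) (hm a).le)

lemma exp_lap_mulVec_one (t : ℝ) (x : V) :
    (exp (t • lapMatrix w m) *ᵥ (fun _ => (1:ℝ))) x = 1 := by
  refine exp_mulVec_one _ ?_ x
  rw [Matrix.smul_mulVec, lap_mulVec_one, smul_zero]

lemma mulVec_mono {M : Matrix V V ℝ} {x : V} (hM : ∀ j, 0 ≤ M x j) {g h : V → ℝ}
    (hgh : ∀ y, g y ≤ h y) : (M *ᵥ g) x ≤ (M *ᵥ h) x :=
  Finset.sum_le_sum fun y _ => mul_le_mul_of_nonneg_left (hgh y) (hM y)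

lemma mulVec_sq {M : Matrix V V ℝ} {x : V} (hM : ∀ j, 0 ≤ M x j)
    (hrow : (M *ᵥ (fun _ => (1:ℝ))) x = 1) (g : V → ℝ) :
    ((M *ᵥ g) x) ^ 2 ≤ (M *ᵥ (fun y => g y ^ 2)) x := by
  have cs := Finset.sum_sq_le_sum_mul_sum_of_sq_eq_mul Finset.univ
    (f := fun y => M x y) (g := fun y => M x y * g y ^ 2)
    (r := fun y => M x y * g y)
    (fun y _ => hM y) (fun y _ => mul_nonneg (hM y) (sq_nonneg _))
    (fun y _ => by ring)
  have hrow' : ∑ y, M x y = 1 := by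
    simpa [Matrix.mulVec, dotProduct] using hrow
  calc ((M *ᵥ g) x) ^ 2 = (∑ y, M x y * g y) ^ 2 := rfl
    _ ≤ (∑ y, M x y) * ∑ y, M x y * g y ^ 2 := cs
    _ = (M *ᵥ (fun y => g y ^ 2)) x := by
        rw [hrow', one_mul]; rfl

lemma hasDerivAt_exp_mulVec (g : V → ℝ) (z : V) (t : ℝ) :
    HasDerivAt (fun s : ℝ => (exp (s • lapMatrix w m) *ᵥ g) z)
      (((lapMatrix w m * exp (t • lapMatrix w m)) *ᵥ g) z) t :=
  (evalCLM g z).hasFDerivAt.comp_hasDerivAt t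
    (hasDerivAt_exp_smul_const' (lapMatrix w m) t)

lemma hasDerivAt_exp_entry (i j : V) (t : ℝ) :
    HasDerivAt (fun s : ℝ => exp (s • lapMatrix w m) i j)
      ((lapMatrix w m * exp (t • lapMatrix w m)) i j) t :=
  (entryCLM i j).hasFDerivAt.comp_hasDerivAt t
    (hasDerivAt_exp_smul_const' (lapMatrix w m) t)

lemma hasDerivAt_u (f : V → ℝ) (z : V) (t s₀ : ℝ) :
    HasDerivAt (fun s : ℝ => (exp ((t - s) • lapMatrix w m) *ᵥ f) z)
      (-(graphLap w m (exp ((t - s₀) • lapMatrix w m) *ᵥ f) z)) s₀ := by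
  have h2 : HasDerivAt (fun s : ℝ => t - s) (-1) s₀ := by
    simpa using (hasDerivAt_id s₀).const_sub t
  have h := (hasDerivAt_exp_mulVec w m f z (t - s₀)).comp s₀ h2
  have heq : ((lapMatrix w m * exp ((t - s₀) • lapMatrix w m)) *ᵥ f) z * (-1)
      = -(graphLap w m (exp ((t - s₀) • lapMatrix w m) *ᵥ f) z) := by
    rw [← Matrix.mulVec_mulVec, mulVec_lap]
    ring
  rw [heq] at h
  exact h

end WithGraph

section KeyLemma

variable (w : V → V → ℝ) (m : V → ℝ)

lemma mulVec_apply' (M : Matrix V V ℝ) (g : V → ℝ) (x : V) :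
    (M *ᵥ g) x = ∑ y, M x y * g y := rfl

lemma hasDerivAt_gamma_u (f : V → ℝ) (t : ℝ) (y : V) (s₀ : ℝ) :
    HasDerivAt (fun s : ℝ => bakryGamma w m (exp ((t - s) • lapMatrix w m) *ᵥ f)
        (exp ((t - s) • lapMatrix w m) *ᵥ f) y)
      (-2 * bakryGamma w m (exp ((t - s₀) • lapMatrix w m) *ᵥ f)
        (graphLap w m (exp ((t - s₀) • lapMatrix w m) *ᵥ f)) y) s₀ := by
  set u := fun s : ℝ => exp ((t - s) • lapMatrix w m) *ᵥ f with hu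
  have hterm : ∀ z : V, HasDerivAt (fun s => w y z * (u s z - u s y) ^ 2)
      (w y z * ((2:ℕ) * (u s₀ z - u s₀ y) ^ 1 *
        (-(graphLap w m (u s₀) z) - -(graphLap w m (u s₀) y)))) s₀ := by
    intro z
    have hz := (hasDerivAt_u w m f z t s₀).sub (hasDerivAt_u w m f y t s₀)
    exact (hz.pow 2).const_mul (w y z)
  have hsum := HasDerivAt.fun_sum (fun z (_ : z ∈ Finset.univ) => hterm z)
  have hfull := hsum.const_mul (1 / (2 * m y))
  have hfun : (fun s : ℝ => bakryGamma w m (u s) (u s) y)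
      = fun s => (1 / (2 * m y)) * ∑ z, w y z * (u s z - u s y) ^ 2 := by
    funext s; exact gamma_self_eq w m (u s) y
  have hval : (1 / (2 * m y)) * ∑ z, w y z * ((2:ℕ) * (u s₀ z - u s₀ y) ^ 1 *
        (-(graphLap w m (u s₀) z) - -(graphLap w m (u s₀) y)))
      = -2 * bakryGamma w m (u s₀) (graphLap w m (u s₀)) y := by
    rw [gamma_eq]
    have hs : ∑ z, w y z * ((2:ℕ) * (u s₀ z - u s₀ y) ^ 1 *
          (-(graphLap w m (u s₀) z) - -(graphLap w m (u s₀) y)))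
        = -2 * ∑ z, w y z * ((u s₀ z - u s₀ y) *
            (graphLap w m (u s₀) z - graphLap w m (u s₀) y)) := by
      rw [Finset.mul_sum]
      exact Finset.sum_congr rfl fun z _ => by push_cast; ring
    rw [hs]; ring
  rw [hfun, ← hval]
  exact hfull

lemma key_bound (hnonneg : ∀ x y, 0 ≤ w x y) (hm : ∀ x, 0 < m x)
    (hdeg : ∀ x, 0 < vertexDeg w x) {K n : ℝ} (hK : 0 < K) (hn : 0 < n)
    (hCD : CDCond w m K n) (f : V → ℝ) (hf : ∀ z, bakryGamma w m f f z ≤ 1)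
    (x : V) {t : ℝ} (ht : 0 ≤ t) :
    (graphLap w m (exp (t • lapMatrix w m) *ᵥ f) x) ^ 2
        * (K * n / (2 * nDeg w m x) + 1 - Real.exp (-(2 * K * t)))
      ≤ K * n * Real.exp (-(2 * K * t)) := by
  have hKn : (0:ℝ) < K * n := mul_pos hK hn
  set L := lapMatrix w m with hL
  set u : ℝ → V → ℝ := fun s => exp ((t - s) • L) *ᵥ f with hu
  set c : ℝ := graphLap w m (exp (t • L) *ᵥ f) x with hc
  set Φ : ℝ → ℝ := fun s => (exp (s • L) *ᵥ fun y => bakryGamma w m (u s) (u s) y) x with hPhi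
  -- derivative of Φ
  have hDer : ∀ s₀ : ℝ, HasDerivAt Φ
      (((L * exp (s₀ • L)) *ᵥ fun y => bakryGamma w m (u s₀) (u s₀) y) x
        + (exp (s₀ • L) *ᵥ fun y =>
            -2 * bakryGamma w m (u s₀) (graphLap w m (u s₀)) y) x) s₀ := by
    intro s₀
    have hterm : ∀ y : V, HasDerivAt
        (fun s => exp (s • L) x y * bakryGamma w m (u s) (u s) y)
        ((L * exp (s₀ • L)) x y * bakryGamma w m (u s₀) (u s₀) y
          + exp (s₀ • L) x y * (-2 * bakryGamma w m (u s₀) (graphLap w m (u s₀)) y)) s₀ :=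
      fun y => (hasDerivAt_exp_entry w m x y s₀).mul (hasDerivAt_gamma_u w m f t y s₀)
    have hsum := HasDerivAt.fun_sum (fun y (_ : y ∈ Finset.univ) => hterm y)
    have hshape : Φ = fun s => ∑ y, exp (s • L) x y * bakryGamma w m (u s) (u s) y := rfl
    rw [hshape, mulVec_apply', mulVec_apply', ← Finset.sum_add_distrib]
    exact hsum
  -- commute facts
  have hcommE : ∀ s₀ : ℝ, L * exp (s₀ • L) = exp (s₀ • L) * L :=
    fun s₀ => (((Commute.refl L).smul_right s₀).exp_right).eq
  -- the constant c
  have hcc : ∀ s₀ : ℝ, (exp (s₀ • L) *ᵥ graphLap w m (u s₀)) x = c := by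
    intro s₀
    simp only [hu]
    rw [← mulVec_lap w m, Matrix.mulVec_mulVec, Matrix.mulVec_mulVec]
    have hmat : (exp (s₀ • L) * L) * exp ((t - s₀) • L) = L * exp (t • L) := by
      rw [← hcommE s₀, mul_assoc, ← Matrix.exp_add_of_commute _ _
        (((Commute.refl L).smul_left s₀).smul_right (t - s₀)), ← add_smul,
        show s₀ + (t - s₀) = t from by ring]
    rw [hmat, ← Matrix.mulVec_mulVec, mulVec_lap w m]
  -- lower bound for the derivative of Φ on [0, t]
  have hDlo : ∀ s₀ ∈ Set.Icc (0:ℝ) t,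
      2 * K * Φ s₀ + (2 / n) * c ^ 2
        ≤ ((L * exp (s₀ • L)) *ᵥ fun y => bakryGamma w m (u s₀) (u s₀) y) x
          + (exp (s₀ • L) *ᵥ fun y =>
              -2 * bakryGamma w m (u s₀) (graphLap w m (u s₀)) y) x := by
    intro s₀ hs₀
    have hEnn : ∀ j, 0 ≤ exp (s₀ • L) x j :=
      fun j => exp_lap_entry_nonneg w m hnonneg hm hs₀.1 x j
    have step1 : ((L * exp (s₀ • L)) *ᵥ fun y => bakryGamma w m (u s₀) (u s₀) y) x
        = (exp (s₀ • L) *ᵥ fun y => graphLap w m (bakryGamma w m (u s₀) (u s₀)) y) x := by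
      rw [hcommE s₀, ← Matrix.mulVec_mulVec]
      congr 1
      rw [mulVec_lap w m]
    rw [step1]
    rw [mulVec_apply', mulVec_apply', ← Finset.sum_add_distrib]
    have hpoint : ∀ y, 2 * K * bakryGamma w m (u s₀) (u s₀) y
          + (2 / n) * (graphLap w m (u s₀) y) ^ 2
        ≤ graphLap w m (bakryGamma w m (u s₀) (u s₀)) y
          + (-2 * bakryGamma w m (u s₀) (graphLap w m (u s₀)) y) := by
      intro y
      have hcd := hCD (u s₀) y
      have h2 := gamma2_self w m (u s₀) y
      have h3 : 2 / n * (graphLap w m (u s₀) y) ^ 2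
          = 2 * (1 / n * (graphLap w m (u s₀) y) ^ 2) := by ring
      linarith [hcd, h2, h3]
    calc 2 * K * Φ s₀ + (2 / n) * c ^ 2
        ≤ 2 * K * Φ s₀ + (2 / n) * (exp (s₀ • L) *ᵥ fun y => (graphLap w m (u s₀) y) ^ 2) x := by
          have hj := mulVec_sq hEnn (exp_lap_mulVec_one w m s₀ x) (graphLap w m (u s₀))
          rw [hcc s₀] at hj
          have := mul_le_mul_of_nonneg_left hj (by positivity : (0:ℝ) ≤ 2 / n)
          linarith
      _ = ∑ y, exp (s₀ • L) x y * (2 * K * bakryGamma w m (u s₀) (u s₀) y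
            + (2 / n) * (graphLap w m (u s₀) y) ^ 2) := by
          rw [hPhi]
          simp only [mulVec_apply']
          rw [Finset.mul_sum, Finset.mul_sum, ← Finset.sum_add_distrib]
          exact Finset.sum_congr rfl fun y _ => by ring
      _ ≤ ∑ y, exp (s₀ • L) x y * (graphLap w m (bakryGamma w m (u s₀) (u s₀)) y
            + -2 * bakryGamma w m (u s₀) (graphLap w m (u s₀)) y) :=
          Finset.sum_le_sum fun y _ => mul_le_mul_of_nonneg_left (hpoint y) (hEnn y)
      _ = _ := Finset.sum_congr rfl fun y _ => by ring
  -- the comparison function χ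
  set χ : ℝ → ℝ := fun s => Real.exp (-(2 * K * s)) * (Φ s + c ^ 2 / (K * n)) with hχ
  have hχder : ∀ s₀ : ℝ, HasDerivAt χ
      (Real.exp (-(2 * K * s₀)) * ((((L * exp (s₀ • L)) *ᵥ fun y =>
          bakryGamma w m (u s₀) (u s₀) y) x
        + (exp (s₀ • L) *ᵥ fun y =>
            -2 * bakryGamma w m (u s₀) (graphLap w m (u s₀)) y) x)
        - 2 * K * (Φ s₀ + c ^ 2 / (K * n)))) s₀ := by
    intro s₀
    have hexp : HasDerivAt (fun s : ℝ => Real.exp (-(2 * K * s)))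
        (Real.exp (-(2 * K * s₀)) * (-(2 * K))) s₀ := by
      have hlin : HasDerivAt (fun s : ℝ => -(2 * K * s)) (-(2 * K)) s₀ := by
        simpa using ((hasDerivAt_id s₀).const_mul (2 * K)).fun_neg
      exact hlin.exp
    have := hexp.fun_mul ((hDer s₀).add_const (c ^ 2 / (K * n)))
    refine this.congr_deriv ?_
    ring
  have hχmono : MonotoneOn χ (Set.Icc 0 t) := by
    refine monotoneOn_of_deriv_nonneg (convex_Icc 0 t) ?_ ?_ ?_
    · exact (Differentiable.continuous fun s => (hχder s).differentiableAt).continuousOn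
    · exact fun s _ => ((hχder s).differentiableAt).differentiableWithinAt
    · intro s hs
      rw [interior_Icc] at hs
      rw [(hχder s).deriv]
      have hle := hDlo s ⟨hs.1.le, hs.2.le⟩
      have h2K : 2 * K * (Φ s + c ^ 2 / (K * n)) = 2 * K * Φ s + (2 / n) * c ^ 2 := by
        field_simp
      rw [h2K]
      have : (0:ℝ) ≤ Real.exp (-(2 * K * s)) := (Real.exp_pos _).le
      nlinarith [hle]
  have hχ0t : χ 0 ≤ χ t :=
    hχmono (Set.left_mem_Icc.mpr ht) (Set.right_mem_Icc.mpr ht) ht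
  -- evaluate χ 0 and χ t
  have hu0 : u 0 = exp (t • L) *ᵥ f := by rw [hu]; simp
  have hΦ0 : Φ 0 = bakryGamma w m (exp (t • L) *ᵥ f) (exp (t • L) *ᵥ f) x := by
    rw [hPhi]
    simp only [zero_smul, NormedSpace.exp_zero, Matrix.one_mulVec, hu0]
  have hut : u t = f := by
    rw [hu]
    simp only [sub_self, zero_smul, NormedSpace.exp_zero, Matrix.one_mulVec]
  have hΦt : Φ t ≤ 1 := by
    rw [hPhi]
    simp only [hut]
    calc (exp (t • L) *ᵥ fun y => bakryGamma w m f f y) x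
        ≤ (exp (t • L) *ᵥ fun _ => (1:ℝ)) x :=
          mulVec_mono (fun j => exp_lap_entry_nonneg w m hnonneg hm ht x j) hf
      _ = 1 := exp_lap_mulVec_one w m t x
  have hcs : c ^ 2 ≤ 2 * nDeg w m x * Φ 0 := by
    rw [hΦ0, hc]
    exact lap_sq_le w m hnonneg hm _ x
  -- final arithmetic
  have hD : 0 < nDeg w m x := div_pos (hdeg x) (hm x)
  have hε : (0:ℝ) < Real.exp (-(2 * K * t)) := Real.exp_pos _
  have hχ0 : c ^ 2 / (2 * nDeg w m x) + c ^ 2 / (K * n) ≤ χ 0 := by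
    rw [hχ]
    simp only [mul_zero, neg_zero, Real.exp_zero, one_mul]
    have : c ^ 2 / (2 * nDeg w m x) ≤ Φ 0 := by
      rw [div_le_iff₀ (by positivity)]
      linarith [hcs]
    linarith
  have hχt : χ t ≤ Real.exp (-(2 * K * t)) * (1 + c ^ 2 / (K * n)) := by
    rw [hχ]
    have := hΦt
    nlinarith [hε]
  have hmain : c ^ 2 / (2 * nDeg w m x) + c ^ 2 / (K * n)
      ≤ Real.exp (-(2 * K * t)) * (1 + c ^ 2 / (K * n)) := le_trans hχ0 (le_trans hχ0t hχt)
  have h1 := mul_le_mul_of_nonneg_left hmain hKn.le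
  rw [mul_add] at h1
  have h2 : K * n * (c ^ 2 / (K * n)) = c ^ 2 := by field_simp
  have h3 : K * n * (c ^ 2 / (2 * nDeg w m x)) = c ^ 2 * (K * n / (2 * nDeg w m x)) := by
    ring
  have h4 : K * n * (Real.exp (-(2 * K * t)) * (1 + c ^ 2 / (K * n)))
      = K * n * Real.exp (-(2 * K * t)) + Real.exp (-(2 * K * t)) * c ^ 2 := by
    field_simp
  rw [h2, h3, h4] at h1
  nlinarith [h1]

end KeyLemma

section Final

variable (w : V → V → ℝ) (m : V → ℝ)

lemma heatSemigroup_apply (t : ℝ) (f : V → ℝ) (x : V) :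
    heatSemigroup w m t f x = (exp (t • lapMatrix w m) *ᵥ f) x := rfl

lemma hasDerivAt_heat (f : V → ℝ) (x : V) (s : ℝ) :
    HasDerivAt (fun r : ℝ => heatSemigroup w m r f x)
      (graphLap w m (exp (s • lapMatrix w m) *ᵥ f) x) s := by
  have h := hasDerivAt_exp_mulVec w m f x s
  rw [← Matrix.mulVec_mulVec, mulVec_lap w m] at h
  simpa only [heatSemigroup_apply] using h

end Final

end Aux

open Matrix NormedSpace

theorem abs_heat_sub_le_of_CD [Fintype V] [DecidableEq V]
    (w : V → V → ℝ) (m : V → ℝ)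
    (hsymm : ∀ x y, w x y = w y x) (hnonneg : ∀ x y, 0 ≤ w x y)
    (hdiag : ∀ x, w x x = 0) (hm : ∀ x, 0 < m x)
    (hdeg : ∀ x, 0 < vertexDeg w x)
    (K n : ℝ) (hK : 0 < K) (hn : 0 < n) (hCD : CDCond w m K n)
    (f : V → ℝ) (hf : ∀ z, bakryGamma w m f f z ≤ 1)
    (T : ℝ) (hT : 0 < T) (x : V) :
    |heatSemigroup w m T f x - f x| ≤
      Real.sqrt (n / K) * Real.arcsin (1 / Real.sqrt (K * n / (2 * nDeg w m x) + 1)) := by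
  have hD : 0 < nDeg w m x := div_pos (hdeg x) (hm x)
  have hKn : (0:ℝ) < K * n := mul_pos hK hn
  set α : ℝ := K * n / (2 * nDeg w m x) + 1 with hα
  have hα1 : 1 < α := by
    rw [hα]
    nlinarith [div_pos hKn (by positivity : (0:ℝ) < 2 * nDeg w m x)]
  have hα0 : 0 < α := lt_trans one_pos hα1
  have hsqα : 1 < Real.sqrt α := by
    have := Real.sqrt_lt_sqrt (by norm_num : (0:ℝ) ≤ 1) hα1
    simpa using this
  have hsqα0 : 0 < Real.sqrt α := lt_trans one_pos hsqα
  have hC0 : (0:ℝ) ≤ Real.sqrt (n / K) := Real.sqrt_nonneg _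
  set F : ℝ → ℝ :=
    fun s => -(Real.sqrt (n / K) * Real.arcsin (Real.exp (-(K * s)) / Real.sqrt α)) with hF
  set Fd : ℝ → ℝ :=
    fun s => Real.sqrt (K * n) * Real.exp (-(K * s))
      / Real.sqrt (α - Real.exp (-(K * s)) ^ 2) with hFd
  -- derivative of F for s ≥ 0
  have hFder : ∀ s : ℝ, 0 ≤ s → HasDerivAt F (Fd s) s := by
    intro s hs
    have he1 : Real.exp (-(K * s)) ≤ 1 := Real.exp_le_one_iff.mpr (by nlinarith)
    have he0 : 0 < Real.exp (-(K * s)) := Real.exp_pos _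
    have harg : Real.exp (-(K * s)) / Real.sqrt α < 1 := by
      rw [div_lt_one hsqα0]; linarith
    have harg0 : 0 < Real.exp (-(K * s)) / Real.sqrt α := by positivity
    have hi : HasDerivAt (fun r : ℝ => Real.exp (-(K * r)) / Real.sqrt α)
        ((Real.exp (-(K * s)) * -K) / Real.sqrt α) s := by
      have hlin : HasDerivAt (fun r : ℝ => -(K * r)) (-K) s := by
        simpa using ((hasDerivAt_id s).const_mul K).fun_neg
      exact (hlin.exp).div_const _
    have ha := (Real.hasDerivAt_arcsin
      (by linarith : Real.exp (-(K * s)) / Real.sqrt α ≠ -1) (ne_of_lt harg)).comp s hi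
    have hcomp := (ha.const_mul (Real.sqrt (n / K))).fun_neg
    refine hcomp.congr_deriv ?_
    have hpos : 0 < 1 - (Real.exp (-(K * s)) / Real.sqrt α) ^ 2 := by nlinarith
    have hsq : (Real.exp (-(K * s)) / Real.sqrt α) ^ 2 = Real.exp (-(K * s)) ^ 2 / α := by
      rw [div_pow, Real.sq_sqrt hα0.le]
    have hpos' : 0 < 1 - Real.exp (-(K * s)) ^ 2 / α := by rw [← hsq]; exact hpos
    have hss : Real.sqrt (1 - Real.exp (-(K * s)) ^ 2 / α) * Real.sqrt α
        = Real.sqrt (α - Real.exp (-(K * s)) ^ 2) := by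
      rw [← Real.sqrt_mul hpos'.le α]
      congr 1
      field_simp
    have hCK : Real.sqrt (n / K) * K = Real.sqrt (K * n) := by
      rw [show K * n = n / K * K ^ 2 by field_simp]
      rw [Real.sqrt_mul (div_nonneg hn.le hK.le), Real.sqrt_sq hK.le]
    rw [hFd]
    simp only [Function.comp]
    rw [hsq, ← hCK, ← hss]
    ring
  -- |G'| ≤ Fd on [0, ∞)
  have hbound : ∀ s : ℝ, 0 ≤ s →
      |graphLap w m (exp (s • lapMatrix w m) *ᵥ f) x| ≤ Fd s := by
    intro s hs
    have hkey := key_bound w m hnonneg hm hdeg hK hn hCD f hf x hs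
    have he2 : Real.exp (-(2 * K * s)) = Real.exp (-(K * s)) ^ 2 := by
      rw [sq, ← Real.exp_add]; ring_nf
    rw [he2, ← hα] at hkey
    have he1 : Real.exp (-(K * s)) ≤ 1 := Real.exp_le_one_iff.mpr (by nlinarith)
    have he0 : 0 < Real.exp (-(K * s)) := Real.exp_pos _
    have hden : 0 < α - Real.exp (-(K * s)) ^ 2 := by nlinarith
    have hFdnn : 0 ≤ Fd s := by rw [hFd]; positivity
    have hc2 : (graphLap w m (exp (s • lapMatrix w m) *ᵥ f) x) ^ 2 ≤ (Fd s) ^ 2 := by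
      have hFd2 : (Fd s) ^ 2
          = K * n * Real.exp (-(K * s)) ^ 2 / (α - Real.exp (-(K * s)) ^ 2) := by
        rw [hFd]
        rw [div_pow, mul_pow, Real.sq_sqrt hden.le, Real.sq_sqrt hKn.le]
      rw [hFd2, le_div_iff₀ hden]
      linarith [hkey]
    calc |graphLap w m (exp (s • lapMatrix w m) *ᵥ f) x|
        = Real.sqrt ((graphLap w m (exp (s • lapMatrix w m) *ᵥ f) x) ^ 2) :=
          (Real.sqrt_sq_eq_abs _).symm
      _ ≤ Real.sqrt ((Fd s) ^ 2) := Real.sqrt_le_sqrt hc2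
      _ = Fd s := Real.sqrt_sq hFdnn
  -- continuity of F and G
  have hFcont : Continuous F := by
    rw [hF]
    exact Continuous.neg (continuous_const.mul (Real.continuous_arcsin.comp
      ((Real.continuous_exp.comp ((continuous_const.mul continuous_id).neg)).div_const _)))
  have hGdiff : Differentiable ℝ (fun s : ℝ => heatSemigroup w m s f x) :=
    fun s => (hasDerivAt_heat w m f x s).differentiableAt
  have hGcont : Continuous (fun s : ℝ => heatSemigroup w m s f x) := hGdiff.continuous
  -- monotonicity of F ± G
  have hmono : ∀ ε : ℝ, ε = 1 ∨ ε = -1 →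
      MonotoneOn (fun s => F s + ε * heatSemigroup w m s f x) (Set.Icc 0 T) := by
    intro ε hε
    refine monotoneOn_of_deriv_nonneg (convex_Icc 0 T) ?_ ?_ ?_
    · exact (hFcont.add (continuous_const.mul hGcont)).continuousOn
    · intro s hs
      rw [interior_Icc] at hs
      exact (((hFder s hs.1.le).add
        ((hasDerivAt_heat w m f x s).const_mul ε)).differentiableAt).differentiableWithinAt
    · intro s hs
      rw [interior_Icc] at hs
      rw [((hFder s hs.1.le).fun_add ((hasDerivAt_heat w m f x s).const_mul ε)).deriv]
      have hb := abs_le.mp (hbound s hs.1.le)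
      rcases hε with rfl | rfl
      · linarith [hb.1]
      · linarith [hb.2]
  have h0T : (0:ℝ) ∈ Set.Icc (0:ℝ) T := Set.left_mem_Icc.mpr hT.le
  have hTT : T ∈ Set.Icc (0:ℝ) T := Set.right_mem_Icc.mpr hT.le
  have e1 := hmono 1 (Or.inl rfl) h0T hTT hT.le
  have e2 := hmono (-1) (Or.inr rfl) h0T hTT hT.le
  simp only [one_mul, neg_one_mul] at e1 e2
  have hG0 : heatSemigroup w m 0 f x = f x := by
    rw [heatSemigroup_apply, zero_smul, NormedSpace.exp_zero, Matrix.one_mulVec]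
  rw [hG0] at e1 e2
  -- wrap up
  have hF0 : F 0 = -(Real.sqrt (n / K) * Real.arcsin (1 / Real.sqrt α)) := by
    rw [hF]
    simp [one_div]
  have hFT : F T ≤ 0 := by
    rw [hF]
    have : 0 ≤ Real.arcsin (Real.exp (-(K * T)) / Real.sqrt α) :=
      Real.arcsin_nonneg.mpr (by positivity)
    nlinarith
  rw [hF0] at e1 e2
  rw [abs_le]
  have t1 : F T + heatSemigroup w m T f x ≤ heatSemigroup w m T f x := by linarith [hFT]
  have t2 : F T + -heatSemigroup w m T f x ≤ -heatSemigroup w m T f x := by linarith [hFT]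
  have g1 := le_trans e1 t1
  have g2 := le_trans e2 t2
  exact ⟨by linarith [g1], by linarith [g2]⟩
end
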